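/- Let v : [0,T] × Ω → ℝ and suppose for some α ∈ (0,1] and C > 0 that for all t < t+h ≤ T and all bounded paths x: |Dv(t+h^{2+2α}, x_{t∧}) − Dv(t, x)| ≤ 2C h^α + (1/h)|v(t+h^{2+2α}, x_{t∧} ⊕ h) − v(t+h^{2+2α}, x_{t∧}) − v(t, x ⊕_t h) + v(t, x)|, where Dv denotes a spatial difference-quotient derivative. If additionally v is (1/2)-Hölder in time with constant C' (i.e. |v(t',x_{t∧}) − v(t,x)| ≤ C'|t'−t|^{1/2}(1+‖x‖)) and Lipschitz in the bumped path, then |Dv(t+h^{2+2α}, x_{t∧}) − Dv(t, x)| ≤ C'' h^α (1+‖x‖) for a constant C'' depending only on C, C'. In particular, Hölder-in-space regularity of order α of the gradient plus 1/2-Hölder time regularity of v yields time regularity of the gradient of order α/(2+2α). -/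

import Mathlib

/-!
Compare the derivative with a difference quotient of step `b`: Hölder continuity of the
derivative makes the error at most `C b^α` at each time, while the `1/2`-Hölder bound in time
moves the difference quotient by at most `2C' √|t - s| / b`. The choice
`b = |t - s|^(1/(2+2α))` balances the two errors, both becoming `|t - s|^(α/(2+2α))`.
-/

open Real

section HolderDeriv

variable {f g f' g' : ℝ → ℝ} {C α : ℝ}

theorem abs_sub_slope_le_of_holder_deriv (hf : ∀ x, HasDerivAt f (f' x) x) (hC : 0 ≤ C)
    (hα : 0 ≤ α) (hf' : ∀ x y, |f' x - f' y| ≤ C * |x - y| ^ α) (x : ℝ) {b : ℝ} (hb : 0 < b) :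
    |f' x - slope f x (x + b)| ≤ C * b ^ α := by
  obtain ⟨ξ, ⟨hxξ, hξb⟩, hξ⟩ := exists_hasDerivAt_eq_slope f f' (lt_add_of_pos_right x hb)
    (fun y _ => (hf y).continuousAt.continuousWithinAt) (fun y _ => hf y)
  rw [slope_def_field, ← hξ]
  calc |f' x - f' ξ| ≤ C * |x - ξ| ^ α := hf' x ξ
    _ ≤ C * b ^ α := by
      gcongr
      rw [abs_sub_comm, abs_of_pos (sub_pos.2 hxξ)]
      linarith

theorem abs_slope_sub_slope_le {ε : ℝ} (hfg : ∀ y, |f y - g y| ≤ ε) (x : ℝ) {b : ℝ}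
    (hb : 0 < b) : |slope f x (x + b) - slope g x (x + b)| ≤ 2 * ε / b := by
  rw [slope_def_field, slope_def_field, add_sub_cancel_left, div_sub_div_same, abs_div,
    abs_of_pos hb]
  gcongr
  calc |f (x + b) - f x - (g (x + b) - g x)| = |(f (x + b) - g (x + b)) - (f x - g x)| := by
        congr 1; ring
    _ ≤ |f (x + b) - g (x + b)| + |f x - g x| := abs_sub _ _
    _ ≤ 2 * ε := by linarith [hfg (x + b), hfg x]

theorem abs_deriv_sub_deriv_le (hf : ∀ x, HasDerivAt f (f' x) x)
    (hg : ∀ x, HasDerivAt g (g' x) x) (hC : 0 ≤ C) (hα : 0 ≤ α)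
    (hf' : ∀ x y, |f' x - f' y| ≤ C * |x - y| ^ α) (hg' : ∀ x y, |g' x - g' y| ≤ C * |x - y| ^ α)
    {ε : ℝ} (hfg : ∀ y, |f y - g y| ≤ ε) (x : ℝ) {b : ℝ} (hb : 0 < b) :
    |f' x - g' x| ≤ 2 * C * b ^ α + 2 * ε / b := by
  have hf_slope := abs_sub_slope_le_of_holder_deriv hf hC hα hf' x hb
  have hg_slope := abs_sub_slope_le_of_holder_deriv hg hC hα hg' x hb
  have h_slopes := abs_slope_sub_slope_le hfg x hb
  rw [abs_sub_comm] at hg_slope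
  linarith [abs_sub_le (f' x) (slope g x (x + b)) (g' x),
    abs_sub_le (f' x) (slope f x (x + b)) (slope g x (x + b))]

end HolderDeriv

theorem rpow_inv_two_add_two_mul_rpow {δ : ℝ} (hδ : 0 < δ) (α : ℝ) :
    (δ ^ (1 / (2 + 2 * α))) ^ α = δ ^ (α / (2 + 2 * α)) := by
  rw [← rpow_mul hδ.le]
  ring_nf

theorem sqrt_div_rpow_inv_two_add_two_mul {δ α : ℝ} (hδ : 0 < δ) (hα : 0 ≤ α) :
    √δ / δ ^ (1 / (2 + 2 * α)) = δ ^ (α / (2 + 2 * α)) := by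
  rw [sqrt_eq_rpow, ← rpow_sub hδ]
  congr 1
  field_simp
  ring

/-- interpolation trick. If `v : [0,T] × ℝ → ℝ` (here stated for all of
`ℝ × ℝ`) has a spatial derivative `dv` that is `α`-Hölder in space with constant `C`,
and `v` is `1/2`-Hölder in time with constant `C'`, then the spatial derivative is
`α/(2+2α)`-Hölder in time, with a constant `C''` depending only on `C`, `C'` (and `α`). -/
theorem stmt19 (αe C C' : ℝ) (hα : αe ∈ Set.Ioc (0 : ℝ) 1) (hC : 0 ≤ C) (hC' : 0 ≤ C') :
    ∃ C'' : ℝ, 0 < C'' ∧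
      ∀ v dv : ℝ → ℝ → ℝ,
        (∀ t x, HasDerivAt (fun y => v t y) (dv t x) x) →
        (∀ t x y, |dv t x - dv t y| ≤ C * |x - y| ^ αe) →
        (∀ t s x, |v t x - v s x| ≤ C' * Real.sqrt |t - s|) →
        ∀ t s x, |dv t x - dv s x| ≤ C'' * |t - s| ^ (αe / (2 + 2 * αe)) := by
  have hα0 : 0 ≤ αe := hα.1.le
  refine ⟨2 * C + 2 * C' + 1, by positivity, fun v dv hderiv hspace htime t s x => ?_⟩
  rcases eq_or_ne t s with rfl | hts
  · simp only [sub_self, abs_zero]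
    positivity
  set δ := |t - s|
  have hδ : 0 < δ := abs_pos.2 (sub_ne_zero.2 hts)
  have hb : 0 < δ ^ (1 / (2 + 2 * αe)) := rpow_pos_of_pos hδ _
  calc |dv t x - dv s x|
      ≤ 2 * C * (δ ^ (1 / (2 + 2 * αe))) ^ αe
          + 2 * (C' * √δ) / δ ^ (1 / (2 + 2 * αe)) :=
        abs_deriv_sub_deriv_le (hderiv t) (hderiv s) hC hα0 (hspace t) (hspace s)
          (htime t s) x hb
    _ = (2 * C + 2 * C') * δ ^ (αe / (2 + 2 * αe)) := by
        rw [mul_div_assoc, mul_div_assoc, sqrt_div_rpow_inv_two_add_two_mul hδ hα0,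
          rpow_inv_two_add_two_mul_rpow hδ]
        ring
    _ ≤ (2 * C + 2 * C' + 1) * δ ^ (αe / (2 + 2 * αe)) := by
        gcongr ?_ * _
        linarith
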